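/- Let φ(x) = exp(-x²), so that its Fourier transform is φ̂(ω) = (1/√2) exp(-ω²/4). Then for every λ > 0 and every ω ∈ ℝ, Σ_{l∈ℤ} |φ̂((ω + 2πl)/λ)|² ≥ φ̂(π/λ)². -/
import Mathlib


open Real

/-- The Fourier transform of the Gaussian `exp(-x²)`: `φ̂(ω) = (1/√2) exp(-ω²/4)`. -/
noncomputable def gaussFT (w : ℝ) : ℝ := (1 / Real.sqrt 2) * Real.exp (-w ^ 2 / 4)

lemma gaussFT_sq (x : ℝ) : (gaussFT x) ^ 2 = (1 / 2) * Real.exp (-x ^ 2 / 2) := by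
  unfold gaussFT
  rw [mul_pow, ← Real.exp_nat_mul, div_pow, one_pow, Real.sq_sqrt (by norm_num : (2:ℝ) ≥ 0)]
  ring_nf

lemma aux_summable_nat (A b : ℝ) (hA : 0 < A) :
    Summable fun n : ℕ => Real.exp (-A * (n : ℝ) ^ 2 + b * n) := by
  apply summable_of_isBigO_nat (Real.summable_nat_rpow.2 (by norm_num : (-2:ℝ) < -1))
  have h := (rexp_neg_quadratic_isLittleO_rpow_atTop (by linarith : -A < 0) b (-2)).isBigO
  exact h.comp_tendsto tendsto_natCast_atTop_atTop

theorem gaussFT_periodization_lower_bound (lam : ℝ) (hlam : 0 < lam) (w : ℝ) :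
    ∑' l : ℤ, (gaussFT ((w + 2 * Real.pi * l) / lam)) ^ 2 ≥
      (gaussFT (Real.pi / lam)) ^ 2 := by
  have hA : 0 < 2 * Real.pi ^ 2 / lam ^ 2 :=
    div_pos (by positivity) (by positivity)
  have hsum : Summable fun l : ℤ => (gaussFT ((w + 2 * Real.pi * l) / lam)) ^ 2 := by
    simp_rw [gaussFT_sq]
    apply Summable.of_nat_of_neg
    · apply (((aux_summable_nat _ (-2 * Real.pi * w / lam ^ 2) hA).mul_left
        ((1/2) * Real.exp (-w ^ 2 / (2 * lam ^ 2)))).congr ?_)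
      intro n
      rw [mul_assoc, ← Real.exp_add]
      push_cast
      congr 1
      field_simp
      ring
    · apply (((aux_summable_nat _ (2 * Real.pi * w / lam ^ 2) hA).mul_left
        ((1/2) * Real.exp (-w ^ 2 / (2 * lam ^ 2)))).congr ?_)
      intro n
      rw [mul_assoc, ← Real.exp_add]
      push_cast
      congr 1
      field_simp
      ring
  set l0 : ℤ := -round (w / (2 * Real.pi)) with hl0
  have hπ : (0:ℝ) < Real.pi := Real.pi_pos
  have habs : |w + 2 * Real.pi * l0| ≤ Real.pi := by
    have h1 : |w / (2 * Real.pi) - round (w / (2 * Real.pi))| ≤ 1 / 2 :=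
      abs_sub_round _
    have h2 : w + 2 * Real.pi * l0 =
        (2 * Real.pi) * (w / (2 * Real.pi) - round (w / (2 * Real.pi))) := by
      rw [hl0]; push_cast; field_simp; ring
    rw [h2, abs_mul, abs_of_pos (by positivity : (0:ℝ) < 2 * Real.pi)]
    nlinarith
  have hterm : (gaussFT (Real.pi / lam)) ^ 2 ≤
      (gaussFT ((w + 2 * Real.pi * l0) / lam)) ^ 2 := by
    rw [gaussFT_sq, gaussFT_sq]
    apply mul_le_mul_of_nonneg_left _ (by norm_num)
    apply Real.exp_le_exp.2
    have hsq : (w + 2 * Real.pi * l0) ^ 2 ≤ Real.pi ^ 2 := by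
      rw [← sq_abs]
      exact pow_le_pow_left₀ (abs_nonneg _) habs 2
    rw [div_pow, div_pow]
    rw [neg_div, neg_div, neg_le_neg_iff]
    apply div_le_div_of_nonneg_right _ (by norm_num)
    exact div_le_div_of_nonneg_right hsq (by positivity)
  exact le_trans hterm (Summable.le_tsum hsum l0 fun _ _ => sq_nonneg _)
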